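/- arXiv:1604.06031 — 7 statements merged into one kernel-verified Lean document; each statement's English description precedes it below -/
import Mathlib

section
/- For any group G and any integers i, j ≥ 1, the p-th power subgroup satisfies γ_i(G)^(p^j) ≤ γ_{i+j}(G) whenever G/[G,G] has exponent p; consequently, if exp(G/G') = p then the p-central series coincides with the lower central series: λ_n(G) = γ_n(G) for all n ≥ 1. -/
/-- The subgroup generated by `m`-th powers of elements of `H`. -/
def pPow {G : Type*} [Group G] (H : Subgroup G) (m : ℕ) : Subgroup G :=
  Subgroup.closure {x : G | ∃ h ∈ H, x = h ^ m}

/-- The `p`-central series: `lam p 1 = ⊤` and `lam p (n+1) = [lam p n, G] ⊔ (lam p n)^p`.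
    (We also set `lam p 0 = ⊤`.) -/
def lam {G : Type*} [Group G] (p : ℕ) : ℕ → Subgroup G
  | 0 => ⊤
  | 1 => ⊤
  | (n+2) => ⁅(lam p (n+1) : Subgroup G), (⊤ : Subgroup G)⁆ ⊔ pPow (lam p (n+1)) p

theorem pPow_normal {G : Type*} [Group G] (H : Subgroup G) [hH : H.Normal] (m : ℕ) :
    (pPow H m).Normal := by
  have key : ∀ x ∈ pPow H m, ∀ g : G, g * x * g⁻¹ ∈ pPow H m := by
    intro x hx
    induction hx using Subgroup.closure_induction with
    | mem y hy =>
        intro g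
        obtain ⟨h, hh, rfl⟩ := hy
        refine Subgroup.subset_closure ⟨g * h * g⁻¹, hH.conj_mem h hh g, ?_⟩
        exact conj_pow.symm
    | one => intro g; simpa using (pPow H m).one_mem
    | mul x y hx hy ihx ihy =>
        intro g
        have h2 := mul_mem (ihx g) (ihy g)
        have : g * x * g⁻¹ * (g * y * g⁻¹) = g * (x * y) * g⁻¹ := by group
        rwa [this] at h2
    | inv x hx ihx =>
        intro g
        have h2 := inv_mem (ihx g)
        have : (g * x * g⁻¹)⁻¹ = g * x⁻¹ * g⁻¹ := by group
        rwa [this] at h2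
  exact ⟨fun x hx g => key x hx g⟩

theorem lam_normal' {G : Type*} [Group G] (p : ℕ) : ∀ n, (lam (G := G) p n).Normal
  | 0 => inferInstanceAs (⊤ : Subgroup G).Normal
  | 1 => inferInstanceAs (⊤ : Subgroup G).Normal
  | (n+2) => by
      haveI := lam_normal' (G := G) p (n+1)
      haveI := pPow_normal (lam (G := G) p (n+1)) p
      show (⁅(lam p (n+1) : Subgroup G), (⊤ : Subgroup G)⁆ ⊔ pPow (lam p (n+1)) p).Normal
      infer_instance

instance lam_normal {G : Type*} [Group G] (p n : ℕ) : (lam (G := G) p n).Normal :=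
  lam_normal' p n

/-- The union of all conjugates of the cyclic subgroup generated by `x`. -/
def conjClosure {G : Type*} [Group G] (x : G) : Set G :=
  ⋃ g : G, (fun h => g⁻¹ * h * g) '' (Subgroup.zpowers x : Set G)

/-- `Σ(x,y)`: the union of all conjugates of `⟨x⟩`, `⟨y⟩` and `⟨xy⟩`. -/
def SigmaSet {G : Type*} [Group G] (x y : G) : Set G :=
  conjClosure x ∪ conjClosure y ∪ conjClosure (x * y)

/-- `{x₁,y₁}` and `{x₂,y₂}` form a Beauville structure for `G`. -/
def IsBeauvilleStructure {G : Type*} [Group G] (x₁ y₁ x₂ y₂ : G) : Prop :=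
  Subgroup.closure {x₁, y₁} = ⊤ ∧ Subgroup.closure {x₂, y₂} = ⊤ ∧
    SigmaSet x₁ y₁ ∩ SigmaSet x₂ y₂ = {1}

/-- A Beauville group: a finite nontrivial (2-generated) group admitting a Beauville
structure. -/
def IsBeauvilleGroup (G : Type*) [Group G] : Prop :=
  Finite G ∧ Nontrivial G ∧ ∃ x₁ y₁ x₂ y₂ : G, IsBeauvilleStructure x₁ y₁ x₂ y₂

/-! Modulo `γ_{k+2}` the subgroup `γ_{k+1} = [γ_k, G]` is central, so `[a, g]^p ≡ [a^p, g]` for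
`a ∈ γ_k` and `p`-th powering is a homomorphism on it. By induction on `k`, `a^p ∈ γ_{k+1}`, hence
`[a^p, g] ∈ γ_{k+2}` and `γ_{k+1}^p ≤ γ_{k+2}`; the base case `G^p ≤ G'` is the exponent
hypothesis. Iterating gives `γ_i^{p^j} ≤ γ_{i+j}`, and the power term in the recursion for `λ` is
absorbed by the commutator term, so `λ_n = γ_n`. -/

open Subgroup

section Commutators

open scoped commutatorElement

variable {G : Type*} [Group G]

theorem commutatorElement_pow_left_of_commute {a g : G} (h : Commute a ⁅a, g⁆) (m : ℕ) :
    ⁅a ^ m, g⁆ = ⁅a, g⁆ ^ m := by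
  induction m with
  | zero => simp
  | succ m ih =>
    have hstep : ⁅a ^ (m + 1), g⁆ = a * ⁅a ^ m, g⁆ * a⁻¹ * ⁅a, g⁆ := by
      simp only [pow_succ', commutatorElement_def]
      group
    rw [hstep, ih, ((h.pow_right m).eq : a * _ = _), mul_inv_cancel_right, pow_succ]

theorem pow_eq_one_of_mem_commutator_top {A : Subgroup G} {n : ℕ}
    (hcentral : ⁅⁅A, (⊤ : Subgroup G)⁆, (⊤ : Subgroup G)⁆ = ⊥)
    (hA : ∀ a ∈ A, a ^ n ∈ ⁅A, (⊤ : Subgroup G)⁆)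
    {x : G} (hx : x ∈ ⁅A, (⊤ : Subgroup G)⁆) : x ^ n = 1 := by
  have hcenter : ⁅A, (⊤ : Subgroup G)⁆ ≤ center G := by
    rwa [commutator_eq_bot_iff_le_centralizer, coe_top, centralizer_univ] at hcentral
  rw [Subgroup.commutator_def] at hx hcenter
  induction hx using closure_induction with
  | mem _ hy =>
    obtain ⟨a, ha, g, -, rfl⟩ := hy
    have hcomm : Commute a ⁅a, g⁆ :=
      mem_center_iff.mp (hcenter (subset_closure ⟨a, ha, g, mem_top g, rfl⟩)) a
    rw [← commutatorElement_pow_left_of_commute hcomm, ← mem_bot, ← hcentral]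
    exact commutator_mem_commutator (hA a ha) (mem_top g)
  | one => exact one_pow n
  | mul y z hy _ hyn hzn =>
    rw [Commute.mul_pow (mem_center_iff.mp (hcenter hy) z).symm, hyn, hzn, one_mul]
  | inv y _ hyn => rw [inv_pow, hyn, inv_one]

theorem pow_mem_commutator_commutator_top {A : Subgroup G} [A.Normal] {n : ℕ}
    (hA : ∀ a ∈ A, a ^ n ∈ ⁅A, (⊤ : Subgroup G)⁆)
    {x : G} (hx : x ∈ ⁅A, (⊤ : Subgroup G)⁆) :
    x ^ n ∈ ⁅⁅A, (⊤ : Subgroup G)⁆, (⊤ : Subgroup G)⁆ := by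
  set N := ⁅⁅A, (⊤ : Subgroup G)⁆, (⊤ : Subgroup G)⁆
  let π := QuotientGroup.mk' N
  have hmap : ∀ H : Subgroup G, ⁅H, (⊤ : Subgroup G)⁆.map π = ⁅H.map π, ⊤⁆ := fun H => by
    rw [map_commutator, map_top_of_surjective π (QuotientGroup.mk'_surjective N)]
  rw [← QuotientGroup.eq_one_iff, ← QuotientGroup.mk'_apply, map_pow]
  refine pow_eq_one_of_mem_commutator_top (A := A.map π) ?_ ?_ ?_
  · rw [← hmap, ← hmap, Subgroup.map_eq_bot_iff, QuotientGroup.ker_mk']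
  · rintro _ ⟨a, ha, rfl⟩
    rw [← map_pow, ← hmap]
    exact mem_map_of_mem π (hA a ha)
  · rw [← hmap]
    exact mem_map_of_mem π hx

end Commutators

section LowerCentralSeries

variable {G : Type*} [Group G] {p : ℕ}

theorem pow_mem_lowerCentralSeries_succ (hp : ∀ g : G, g ^ p ∈ commutator G) :
    ∀ {k : ℕ} {x : G}, x ∈ (⊤ : Subgroup G).lowerCentralSeries k →
      x ^ p ∈ (⊤ : Subgroup G).lowerCentralSeries (k + 1)
  | 0, x, _ => hp x
  | _ + 1, _, hx =>
    pow_mem_commutator_commutator_top (fun _ ha => pow_mem_lowerCentralSeries_succ hp ha) hx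

theorem pow_pow_mem_lowerCentralSeries_add (hp : ∀ g : G, g ^ p ∈ commutator G)
    {k : ℕ} {x : G} (hx : x ∈ (⊤ : Subgroup G).lowerCentralSeries k) :
    ∀ j : ℕ, x ^ p ^ j ∈ (⊤ : Subgroup G).lowerCentralSeries (k + j)
  | 0 => by simpa using hx
  | j + 1 => by
    rw [pow_succ, pow_mul]
    exact pow_mem_lowerCentralSeries_succ hp (pow_pow_mem_lowerCentralSeries_add hp hx j)

theorem pPow_le_iff {H K : Subgroup G} {m : ℕ} : pPow H m ≤ K ↔ ∀ h ∈ H, h ^ m ∈ K := by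
  rw [pPow, closure_le]
  exact ⟨fun h x hx => h ⟨x, hx, rfl⟩, by rintro h _ ⟨x, hx, rfl⟩; exact h x hx⟩

theorem pPow_lowerCentralSeries_le (hp : ∀ g : G, g ^ p ∈ commutator G) (k j : ℕ) :
    pPow ((⊤ : Subgroup G).lowerCentralSeries k) (p ^ j) ≤
      (⊤ : Subgroup G).lowerCentralSeries (k + j) :=
  pPow_le_iff.mpr fun _ hx => pow_pow_mem_lowerCentralSeries_add hp hx j

theorem lam_succ_eq_lowerCentralSeries (hp : ∀ g : G, g ^ p ∈ commutator G) :
    ∀ n : ℕ, lam (G := G) p (n + 1) = (⊤ : Subgroup G).lowerCentralSeries n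
  | 0 => rfl
  | n + 1 => by
    rw [lam, lam_succ_eq_lowerCentralSeries hp n, ← Subgroup.lowerCentralSeries_succ, sup_eq_left]
    exact pPow_le_iff.mpr fun _ hx => pow_mem_lowerCentralSeries_succ hp hx

end LowerCentralSeries

theorem pow_exponent_quotient_mem {G : Type*} [Group G] (N : Subgroup G) [N.Normal] (g : G) :
    g ^ Monoid.exponent (G ⧸ N) ∈ N := by
  rw [← QuotientGroup.eq_one_iff, QuotientGroup.mk_pow]
  exact Monoid.pow_exponent_eq_one _

theorem statement_0_general {G : Type*} [Group G] (p : ℕ)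
    (hexp : Monoid.exponent (G ⧸ commutator G) = p) :
    (∀ i j : ℕ, 1 ≤ i → 1 ≤ j →
        pPow ((⊤ : Subgroup G).lowerCentralSeries (i - 1)) (p ^ j) ≤ (⊤ : Subgroup G).lowerCentralSeries (i + j - 1)) ∧
    (∀ n : ℕ, 1 ≤ n → lam (G := G) p n = (⊤ : Subgroup G).lowerCentralSeries (n - 1)) := by
  have hp : ∀ g : G, g ^ p ∈ commutator G := hexp ▸ pow_exponent_quotient_mem _
  refine ⟨fun i j hi _ => ?_, fun n hn => ?_⟩
  · obtain ⟨i, rfl⟩ := Nat.exists_eq_add_of_le' hi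
    simpa [Nat.add_right_comm] using pPow_lowerCentralSeries_le hp i j
  · obtain ⟨n, rfl⟩ := Nat.exists_eq_add_of_le' hn
    exact lam_succ_eq_lowerCentralSeries hp n

/-- If `G/[G,G]` has exponent `p`, then `γ_i(G)^(p^j) ≤ γ_{i+j}(G)` for all `i, j ≥ 1`;
consequently the `p`-central series coincides with the lower central series:
`λ_n(G) = γ_n(G)` for all `n ≥ 1`.  (Here `γ_i(G) = (⊤ : Subgroup G).lowerCentralSeries (i-1)`.) -/
theorem statement_0 {G : Type*} [Group G] (p : ℕ) (hp : p.Prime)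
    (hexp : Monoid.exponent (G ⧸ commutator G) = p) :
    (∀ i j : ℕ, 1 ≤ i → 1 ≤ j →
        pPow ((⊤ : Subgroup G).lowerCentralSeries (i - 1)) (p ^ j) ≤ (⊤ : Subgroup G).lowerCentralSeries (i + j - 1)) ∧
    (∀ n : ℕ, 1 ≤ n → lam (G := G) p n = (⊤ : Subgroup G).lowerCentralSeries (n - 1)) :=
  statement_0_general p hexp
end

section
/- Let G be a group, p a prime, n ≥ 3, x ∈ G and y ∈ λ_2(G). Then (xy)^(p^(n-2)) ≡ x^(p^(n-2)) modulo λ_n(G). -/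
/-!
Modulo `λ_{m+1}(G)` an element `z ∈ λ_m(G)` is central and has `z ^ p = 1`, so
`(x z) ^ p ≡ x ^ p z ^ p ≡ x ^ p`. Writing `(x z) ^ p = x ^ p w` with `w ∈ λ_{m+1}(G)` and
iterating `k` times gives `(x z) ^ (p ^ k) ≡ x ^ (p ^ k)` modulo `λ_{m+k}(G)`.
-/

open scoped commutatorElement

section PowerCongruence

variable {G : Type*} [Group G]

theorem inv_pow_mul_mul_pow_mem_of_commutatorElement_mem {N : Subgroup G} [N.Normal]
    {x z : G} {k : ℕ} (hxz : ⁅x, z⁆ ∈ N) (hz : z ^ k ∈ N) :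
    (x ^ k)⁻¹ * (x * z) ^ k ∈ N := by
  rw [← QuotientGroup.eq_one_iff] at hxz hz ⊢
  have hcomm : Commute (x : G ⧸ N) z := by
    rwa [← QuotientGroup.mk'_apply, map_commutatorElement,
      commutatorElement_eq_one_iff_commute] at hxz
  simp only [QuotientGroup.mk_mul, QuotientGroup.mk_inv, QuotientGroup.mk_pow] at hz ⊢
  rw [hcomm.mul_pow, hz, mul_one, inv_mul_cancel]

theorem commutatorElement_mem_lam_succ {p m : ℕ} (x : G) {z : G} (hz : z ∈ lam p m) :
    ⁅x, z⁆ ∈ lam p (m + 1) := by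
  match m, hz with
  | 0, _ => exact Subgroup.mem_top _
  | m + 1, hz =>
    have hzx : ⁅z, x⁆ ∈ lam p (m + 2) :=
      Subgroup.mem_sup_left (Subgroup.commutator_mem_commutator hz (Subgroup.mem_top x))
    simpa only [commutatorElement_inv] using inv_mem hzx

theorem pow_mem_lam_succ {p m : ℕ} {z : G} (hz : z ∈ lam p m) : z ^ p ∈ lam p (m + 1) := by
  match m, hz with
  | 0, _ => exact Subgroup.mem_top _
  | m + 1, hz => exact Subgroup.mem_sup_right (Subgroup.subset_closure ⟨z, hz, rfl⟩)

theorem inv_pow_mul_mul_pow_mem_lam_succ {p m : ℕ} (x : G) {z : G} (hz : z ∈ lam p m) :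
    (x ^ p)⁻¹ * (x * z) ^ p ∈ lam p (m + 1) :=
  inv_pow_mul_mul_pow_mem_of_commutatorElement_mem (commutatorElement_mem_lam_succ x hz)
    (pow_mem_lam_succ hz)

theorem inv_pow_mul_mul_pow_mem_lam_add {p m : ℕ} (k : ℕ) (x : G) {z : G}
    (hz : z ∈ lam p m) : (x ^ p ^ k)⁻¹ * (x * z) ^ p ^ k ∈ lam p (m + k) := by
  induction k generalizing m x z with
  | zero => simpa using hz
  | succ k ih =>
    set w := (x ^ p)⁻¹ * (x * z) ^ p
    have hw : w ∈ lam p (m + 1) := inv_pow_mul_mul_pow_mem_lam_succ x hz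
    have hxz : (x * z) ^ p = x ^ p * w := by simp only [w, mul_inv_cancel_left]
    have h := ih (x ^ p) hw
    rwa [← hxz, ← pow_mul, ← pow_mul, ← pow_succ', Nat.add_right_comm,
      Nat.add_assoc] at h

end PowerCongruence

theorem statement_2_general {G : Type*} [Group G] (p : ℕ) (n : ℕ) (hn : 3 ≤ n)
    (x y : G) (hy : y ∈ lam (G := G) p 2) :
    (x ^ p ^ (n - 2))⁻¹ * (x * y) ^ p ^ (n - 2) ∈ lam (G := G) p n := by
  have h := inv_pow_mul_mul_pow_mem_lam_add (n - 2) x hy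
  rwa [Nat.add_sub_cancel' (by omega : 2 ≤ n)] at h

/-- For `n ≥ 3`, `x ∈ G` and `y ∈ λ₂(G)`: `(xy)^(p^(n-2)) ≡ x^(p^(n-2))  (mod λ_n(G))`. -/
theorem statement_2 {G : Type*} [Group G] (p : ℕ) (hp : p.Prime) (n : ℕ) (hn : 3 ≤ n)
    (x y : G) (hy : y ∈ lam (G := G) p 2) :
    (x ^ p ^ (n - 2))⁻¹ * (x * y) ^ p ^ (n - 2) ∈ lam (G := G) p n :=
  statement_2_general p n hn x y hy
end

section
/- Let F be the free group on two generators x and y, p a prime, and n ≥ 2. Then the images of x^(p^(n-2)) and y^(p^(n-2)) in F/λ_n(F) generate a subgroup isomorphic to C_p × C_p; in particular they are linearly independent modulo λ_n(F). -/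
/-!
Modulo `λ_{k+2}`, every element of `λ_{k+1}` is central and has `p`-th power trivial, so the
images `a`, `b` of `x ^ p ^ (n-2)` and `y ^ p ^ (n-2)` commute and have order dividing `p`.
For independence, a homomorphism to an abelian group maps `λ_{k+1}` into the `p ^ k`-th powers,
so the exponent sum of `x` in any word of `λ_n` is divisible by `p ^ (n-1)`; the word
`x ^ (i p^(n-2)) y ^ (j p^(n-2))` has `x`-exponent sum `i p^(n-2)`, which forces `p ∣ i`, and
likewise `p ∣ j`.
-/

open scoped commutatorElement

section PCentralSeries

variable {G : Type*} [Group G] {p k : ℕ} {g : G}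

theorem pow_mem_lam_succ_s3 (hg : g ∈ lam p (k + 1)) : g ^ p ∈ lam p (k + 2) :=
  Subgroup.mem_sup_right (Subgroup.subset_closure ⟨g, hg, rfl⟩)

theorem commutatorElement_mem_lam_succ_s3 (hg : g ∈ lam p (k + 1)) (h : G) :
    ⁅g, h⁆ ∈ lam p (k + 2) :=
  Subgroup.mem_sup_left (Subgroup.commutator_mem_commutator hg (Subgroup.mem_top h))

theorem pow_pow_mem_lam (p k : ℕ) (g : G) : g ^ p ^ k ∈ lam p (k + 1) := by
  induction k with
  | zero => exact Subgroup.mem_top _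
  | succ k ih => simpa only [pow_succ, pow_mul] using pow_mem_lam_succ_s3 ih

theorem mk_pow_eq_one_of_mem_lam (hg : g ∈ lam p (k + 1)) :
    (g : G ⧸ lam p (k + 2)) ^ p = 1 := by
  rw [← QuotientGroup.mk_pow, QuotientGroup.eq_one_iff]
  exact pow_mem_lam_succ_s3 hg

theorem commute_mk_of_mem_lam (hg : g ∈ lam p (k + 1)) (h : G) :
    Commute (g : G ⧸ lam p (k + 2)) h := by
  rw [← commutatorElement_eq_one_iff_commute]
  exact (QuotientGroup.eq_one_iff _).mpr (commutatorElement_mem_lam_succ_s3 hg h)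

theorem lam_le_comap_range_powMonoidHom {C : Type*} [CommGroup C] (φ : G →* C) :
    ∀ k, lam p (k + 1) ≤ (powMonoidHom (p ^ k) : C →* C).range.comap φ
  | 0 => fun g _ => ⟨φ g, pow_one _⟩
  | k + 1 => by
      refine sup_le ?_ ?_
      · rw [Subgroup.commutator_le]
        intro g _ h _
        rw [Subgroup.mem_comap, map_commutatorElement,
          commutatorElement_eq_one_iff_commute.mpr (Commute.all _ _)]
        exact one_mem _
      · rw [pPow, Subgroup.closure_le]
        rintro - ⟨h, hh, rfl⟩
        obtain ⟨c, hc⟩ := lam_le_comap_range_powMonoidHom φ k hh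
        exact ⟨c, by simp_all [pow_succ, pow_mul]⟩

end PCentralSeries

def expSum {α : Type*} [DecidableEq α] (x : α) : FreeGroup α →* Multiplicative ℤ :=
  FreeGroup.lift (Pi.mulSingle x (.ofAdd 1))

theorem pow_dvd_expSum_of_mem_lam {α : Type*} [DecidableEq α] {p k : ℕ} (x : α)
    {w : FreeGroup α} (hw : w ∈ lam p (k + 1)) : (p : ℤ) ^ k ∣ (expSum x w).toAdd := by
  obtain ⟨c, hc⟩ := lam_le_comap_range_powMonoidHom (expSum x) k hw
  rw [← hc, powMonoidHom_apply, toAdd_pow, nsmul_eq_mul]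
  exact_mod_cast dvd_mul_right _ _

theorem dvd_of_pow_mul_pow_mem_lam {p m : ℕ} (hp : p ≠ 0) {i j : ℤ}
    (h : (FreeGroup.of 0 ^ p ^ m) ^ i * (FreeGroup.of 1 ^ p ^ m) ^ j ∈
      lam (G := FreeGroup (Fin 2)) p (m + 2)) :
    (p : ℤ) ∣ i ∧ (p : ℤ) ∣ j := by
  have hpm : (p : ℤ) ^ m ≠ 0 := pow_ne_zero _ (by exact_mod_cast hp)
  have h0 := pow_dvd_expSum_of_mem_lam 0 h
  have h1 := pow_dvd_expSum_of_mem_lam 1 h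
  simp only [expSum, map_mul, map_zpow, map_pow, FreeGroup.lift_apply_of, Pi.mulSingle_eq_same,
    Pi.mulSingle_eq_of_ne, ne_eq, one_ne_zero, zero_ne_one, not_false_eq_true, one_pow, one_zpow,
    mul_one, one_mul, toAdd_zpow, toAdd_pow, toAdd_ofAdd, Int.nsmul_eq_mul, Int.zsmul_eq_mul,
    Nat.cast_pow] at h0 h1
  rw [pow_succ', mul_dvd_mul_iff_right hpm] at h0 h1
  exact ⟨h0, h1⟩

section ElementaryAbelian

variable {Q : Type*} [Group Q] {n : ℕ}

def zmodPowHom (a : Q) (ha : a ^ n = 1) : Multiplicative (ZMod n) →* Q :=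
  AddMonoidHom.toMultiplicativeLeft
    (ZMod.lift n ⟨zmultiplesHom (Additive Q) (.ofMul a), by
      rw [zmultiplesHom_apply, natCast_zsmul, ← ofMul_pow, ha, ofMul_one]⟩)

theorem zmodPowHom_ofAdd_intCast (a : Q) (ha : a ^ n = 1) (i : ℤ) :
    zmodPowHom a ha (.ofAdd (i : ZMod n)) = a ^ i := by
  simp [zmodPowHom, ← ofMul_zpow]

theorem ofAdd_intCast_surjective :
    Function.Surjective fun i : ℤ => Multiplicative.ofAdd (i : ZMod n) :=
  ZMod.intCast_surjective

theorem zmodPowHom_range (a : Q) (ha : a ^ n = 1) :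
    (zmodPowHom a ha).range = Subgroup.zpowers a := by
  ext c
  constructor
  · rintro ⟨u, rfl⟩
    obtain ⟨i, rfl⟩ := ofAdd_intCast_surjective u
    exact ⟨i, (zmodPowHom_ofAdd_intCast a ha i).symm⟩
  · rintro ⟨i, rfl⟩
    exact ⟨_, zmodPowHom_ofAdd_intCast a ha i⟩

theorem nonempty_closure_pair_mulEquiv_zmod_prod {a b : Q} (hab : Commute a b)
    (ha : a ^ n = 1) (hb : b ^ n = 1)
    (hind : ∀ i j : ℤ, a ^ i * b ^ j = 1 → (n : ℤ) ∣ i ∧ (n : ℤ) ∣ j) :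
    Nonempty (Subgroup.closure {a, b} ≃* Multiplicative (ZMod n) × Multiplicative (ZMod n)) := by
  have hcomm : ∀ u v, Commute (zmodPowHom a ha u) (zmodPowHom b hb v) := by
    intro u v
    obtain ⟨i, rfl⟩ := ofAdd_intCast_surjective u
    obtain ⟨j, rfl⟩ := ofAdd_intCast_surjective v
    simpa only [zmodPowHom_ofAdd_intCast] using hab.zpow_zpow i j
  let χ := (zmodPowHom a ha).noncommCoprod (zmodPowHom b hb) hcomm
  have hinj : Function.Injective χ := by
    rw [injective_iff_map_eq_one]
    rintro ⟨u, v⟩ huv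
    obtain ⟨i, rfl⟩ := ofAdd_intCast_surjective u
    obtain ⟨j, rfl⟩ := ofAdd_intCast_surjective v
    rw [MonoidHom.noncommCoprod_apply, zmodPowHom_ofAdd_intCast,
      zmodPowHom_ofAdd_intCast] at huv
    obtain ⟨hi, hj⟩ := hind i j huv
    simp only [(ZMod.intCast_zmod_eq_zero_iff_dvd i n).mpr hi,
      (ZMod.intCast_zmod_eq_zero_iff_dvd j n).mpr hj, ofAdd_zero, Prod.mk_one_one]
  have hrange : Subgroup.closure {a, b} = χ.range := by
    rw [MonoidHom.noncommCoprod_range, zmodPowHom_range, zmodPowHom_range, Set.insert_eq,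
      Subgroup.closure_union, Subgroup.zpowers_eq_closure, Subgroup.zpowers_eq_closure]
  exact ⟨(MulEquiv.subgroupCongr hrange).trans (MonoidHom.ofInjective hinj).symm⟩

end ElementaryAbelian

/-- In `F/λ_n(F)` (`F` free of rank 2, `n ≥ 2`), the images of `x^(p^(n-2))` and `y^(p^(n-2))`
generate a subgroup isomorphic to `C_p × C_p`; in particular they are linearly independent
modulo `λ_n(F)`. -/
theorem statement_3 (p n : ℕ) (hp : p.Prime) (hn : 2 ≤ n) :
    let F := FreeGroup (Fin 2)
    let a : F ⧸ lam p n := QuotientGroup.mk (FreeGroup.of 0 ^ p ^ (n - 2))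
    let b : F ⧸ lam p n := QuotientGroup.mk (FreeGroup.of 1 ^ p ^ (n - 2))
    Nonempty ((Subgroup.closure {a, b}) ≃*
        (Multiplicative (ZMod p) × Multiplicative (ZMod p))) ∧
      ∀ i j : ℤ, a ^ i * b ^ j = 1 → a ^ i = 1 ∧ b ^ j = 1 := by
  obtain ⟨m, rfl⟩ : ∃ m, n = m + 2 := ⟨n - 2, by omega⟩
  intro F a b
  have hmem : ∀ x : Fin 2, (FreeGroup.of x ^ p ^ m : F) ∈ lam p (m + 1) :=
    fun x => pow_pow_mem_lam p m _
  have ha : a ^ p = 1 := mk_pow_eq_one_of_mem_lam (hmem 0)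
  have hb : b ^ p = 1 := mk_pow_eq_one_of_mem_lam (hmem 1)
  have hind : ∀ i j : ℤ, a ^ i * b ^ j = 1 → (p : ℤ) ∣ i ∧ (p : ℤ) ∣ j := by
    intro i j h
    rw [← QuotientGroup.mk_zpow, ← QuotientGroup.mk_zpow, ← QuotientGroup.mk_mul,
      QuotientGroup.eq_one_iff] at h
    exact dvd_of_pow_mul_pow_mem_lam hp.ne_zero h
  refine ⟨nonempty_closure_pair_mulEquiv_zmod_prod (commute_mk_of_mem_lam (hmem 0) _) ha hb hind,
    fun i j h => ?_⟩
  obtain ⟨⟨c, rfl⟩, ⟨d, rfl⟩⟩ := hind i j h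
  simp only [zpow_mul, zpow_natCast, ha, hb, one_zpow, and_self]
end

section
/- Let F be the free group on two generators, p a prime, and n ≥ 2. Then the images of the two free generators in the quotient F/λ_n(F) each have order exactly p^(n-1). -/
/-! In every group `x^(p^(n-1)) ∈ λ_n`, which bounds the order from above. The series is
functorial, and in an abelian group `λ_n` consists of `p^(n-1)`-th powers, so `λ_n` vanishes in
`ℤ/p^(n-1)`. Hence the map `F → ℤ/p^(n-1)` sending one generator to `1` and the others to `0`
factors through `F/λ_n(F)`, and the generator's image there has order `p^(n-1)`. -/

section PCentralSeries

variable {G H : Type*} [Group G] [Group H] (p : ℕ)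

theorem lam_succ_succ (n : ℕ) :
    lam (G := G) p (n + 2) = ⁅lam (G := G) p (n + 1), ⊤⁆ ⊔ pPow (lam p (n + 1)) p :=
  rfl

theorem pow_mem_pPow {K : Subgroup G} {x : G} (hx : x ∈ K) : x ^ p ∈ pPow K p :=
  Subgroup.subset_closure ⟨x, hx, rfl⟩

theorem pow_pow_sub_one_mem_lam (x : G) : ∀ n, x ^ p ^ (n - 1) ∈ lam (G := G) p n
  | 0 | 1 => Subgroup.mem_top _
  | n + 2 => by
    rw [lam_succ_succ, show n + 2 - 1 = n + 1 by omega, pow_succ, pow_mul]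
    have ih : x ^ p ^ n ∈ lam p (n + 1) := by simpa using pow_pow_sub_one_mem_lam x (n + 1)
    exact Subgroup.mem_sup_right (pow_mem_pPow p ih)

theorem map_lam_le (f : G →* H) : ∀ n, (lam (G := G) p n).map f ≤ lam p n
  | 0 | 1 => le_top
  | n + 2 => by
    have ih := map_lam_le f (n + 1)
    rw [lam_succ_succ, lam_succ_succ, Subgroup.map_sup, Subgroup.map_commutator]
    refine sup_le_sup (Subgroup.commutator_mono ih le_top) ?_
    rw [pPow, MonoidHom.map_closure, Subgroup.closure_le]
    rintro _ ⟨_, ⟨a, ha, rfl⟩, rfl⟩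
    rw [map_pow]
    exact pow_mem_pPow p (ih ⟨a, ha, rfl⟩)

theorem lam_le_ker_of_lam_eq_bot {n : ℕ} {f : G →* H} (hf : lam (G := H) p n = ⊥) :
    lam (G := G) p n ≤ f.ker :=
  Subgroup.map_le_iff_le_comap.mp ((map_lam_le p f n).trans hf.le)

end PCentralSeries

theorem lam_le_range_powMonoidHom {G : Type*} [CommGroup G] (p : ℕ) :
    ∀ n, lam (G := G) p n ≤ (powMonoidHom (p ^ (n - 1)) : G →* G).range
  | 0 | 1 => fun x _ => ⟨x, pow_one x⟩
  | n + 2 => by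
    rw [lam_succ_succ]
    refine sup_le ?_ ?_
    · rw [Subgroup.commutator_le]
      intro g _ h _
      rw [commutatorElement_eq_one_iff_commute.mpr (Commute.all g h)]
      exact one_mem _
    · rw [pPow, Subgroup.closure_le]
      rintro _ ⟨a, ha, rfl⟩
      obtain ⟨y, rfl⟩ := lam_le_range_powMonoidHom p (n + 1) ha
      exact ⟨y, by simp only [powMonoidHom_apply, ← pow_mul, ← pow_succ]; rfl⟩

theorem lam_eq_bot_of_pow_eq_one {G : Type*} [CommGroup G] (p n : ℕ)
    (h : ∀ g : G, g ^ p ^ (n - 1) = 1) : lam (G := G) p n = ⊥ := by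
  refine le_bot_iff.mp ((lam_le_range_powMonoidHom p n).trans ?_)
  rintro _ ⟨y, rfl⟩
  exact h y

theorem lam_zmod_eq_bot (p n : ℕ) : lam (G := Multiplicative (ZMod (p ^ (n - 1)))) p n = ⊥ :=
  lam_eq_bot_of_pow_eq_one p n fun g => by
    rw [← ofAdd_toAdd g, ← ofAdd_nsmul, nsmul_eq_mul, ZMod.natCast_self, zero_mul, ofAdd_zero]

theorem orderOf_mk_of_quotient_lam {α : Type*} (p n : ℕ) (i : α) :
    orderOf (QuotientGroup.mk (FreeGroup.of i) : FreeGroup α ⧸ lam p n) = p ^ (n - 1) := by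
  classical
  let f : FreeGroup α →* Multiplicative (ZMod (p ^ (n - 1))) :=
    FreeGroup.lift (Pi.mulSingle i (Multiplicative.ofAdd 1))
  let φ := QuotientGroup.lift (lam p n) f (lam_le_ker_of_lam_eq_bot p (lam_zmod_eq_bot p n))
  have hφ : φ (FreeGroup.of i) = Multiplicative.ofAdd 1 := by simp [φ, f]
  apply Nat.dvd_antisymm
  · rw [orderOf_dvd_iff_pow_eq_one, ← QuotientGroup.mk_pow, QuotientGroup.eq_one_iff]
    exact pow_pow_sub_one_mem_lam p _ n
  · simpa only [hφ, orderOf_ofAdd_eq_addOrderOf, ZMod.addOrderOf_one] using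
      orderOf_map_dvd φ (FreeGroup.of i : FreeGroup α ⧸ lam p n)

theorem statement_4_general (p n : ℕ) :
    orderOf (QuotientGroup.mk (FreeGroup.of 0) : FreeGroup (Fin 2) ⧸ lam p n) = p ^ (n - 1) ∧
    orderOf (QuotientGroup.mk (FreeGroup.of 1) : FreeGroup (Fin 2) ⧸ lam p n) = p ^ (n - 1) :=
  ⟨orderOf_mk_of_quotient_lam p n 0, orderOf_mk_of_quotient_lam p n 1⟩

/-- In `F/λ_n(F)` (`F` free of rank 2, `n ≥ 2`), the images of the two free generators
each have order exactly `p^(n-1)`. -/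
theorem statement_4 (p n : ℕ) (hp : p.Prime) (hn : 2 ≤ n) :
    orderOf (QuotientGroup.mk (FreeGroup.of 0) : FreeGroup (Fin 2) ⧸ lam p n) = p ^ (n - 1) ∧
    orderOf (QuotientGroup.mk (FreeGroup.of 1) : FreeGroup (Fin 2) ⧸ lam p n) = p ^ (n - 1) :=
  statement_4_general p n
end

section
/- Let p be a prime and G a finite p-group of order p^n with d(G) = 2 (G is 2-generated) which is not of maximal class. Then for every x ∈ G there exists t ∈ Φ(G) such that t is not of the form [x, g] for any g ∈ G. -/
/-!
If every element of `Φ(G)` had the form `[x, g] = x⁻¹ · g⁻¹ x g`, then `|Φ(G)|` would be at most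
the size `|G : C_G(x)|` of the conjugacy class of `x`. For a `p`-group every maximal subgroup has
index `p`, so `G/Φ(G)` is elementary abelian and, `G` being 2-generated, `|G : Φ(G)| ≤ p²`;
hence `|C_G(x)| ≤ p²`. Such an element forces maximal class: if `n > 2` then `|Z(G)| = p`, the
centralizer of `x Z(G)` in `G/Z(G)` is no larger than `C_G(x)`, and induction on `n` gives
class `n - 2` for `G/Z(G)`, so class `n - 1` for `G`.
-/

open Subgroup MulAction

section Centralizer

variable {G : Type*} [Group G]

theorem Subgroup.index_centralizer_singleton (x : G) :
    (centralizer {x}).index = (orbit (ConjAct G) x).ncard := by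
  rw [centralizer_eq_comap_stabilizer]
  exact (index_comap_of_surjective _ ConjAct.toConjAct.surjective).trans (index_stabilizer _ x)

variable [Finite G]

theorem ncard_range_commutator_le_index (x : G) :
    (Set.range fun g : G => x⁻¹ * g⁻¹ * x * g).ncard ≤ (centralizer {x}).index := by
  rw [index_centralizer_singleton]
  refine Set.ncard_le_ncard_of_injOn (x * ·) ?_ (mul_right_injective x).injOn (Set.toFinite _)
  rintro _ ⟨g, rfl⟩
  exact ⟨ConjAct.toConjAct g⁻¹, by simp [ConjAct.smul_def, mul_assoc]⟩

theorem card_centralizer_le_index {x : G} {H : Subgroup G}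
    (hH : (H : Set G) ⊆ Set.range fun g => x⁻¹ * g⁻¹ * x * g) :
    Nat.card (centralizer {x}) ≤ H.index := by
  have hcard : Nat.card H ≤ (centralizer {x}).index :=
    (Nat.card_coe_set_eq (H : Set G)).trans_le
      ((Set.ncard_le_ncard hH (Set.toFinite _)).trans (ncard_range_commutator_le_index x))
  refine Nat.le_of_mul_le_mul_right ?_
    (Nat.pos_of_ne_zero (index_ne_zero_of_finite (H := centralizer {x})))
  calc Nat.card (centralizer {x}) * (centralizer {x}).index = Nat.card H * H.index := by
        rw [card_mul_index, card_mul_index]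
    _ ≤ (centralizer {x}).index * H.index := Nat.mul_le_mul_right _ hcard
    _ = H.index * (centralizer {x}).index := mul_comm _ _

/-- The conjugacy class of `x` lies in the preimage of the class of its image in `G ⧸ center G`,
and that preimage has `|center G|` times as many elements. -/
theorem index_centralizer_le_card_center_mul (x : G) :
    (centralizer {x}).index ≤
      Nat.card (center G) * (centralizer {(x : G ⧸ center G)}).index := by
  set T := orbit (ConjAct (G ⧸ center G)) (x : G ⧸ center G)
  have hsub : orbit (ConjAct G) x ⊆ (↑) ⁻¹' T := by
    rintro _ ⟨c, rfl⟩
    exact ⟨ConjAct.toConjAct ((ConjAct.ofConjAct c : G) : G ⧸ center G),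
      by simp [ConjAct.smul_def]⟩
  have hpre : ((↑) ⁻¹' T : Set G).ncard = Nat.card (center G) * T.ncard := by
    rw [← Nat.card_coe_set_eq, Nat.card_congr (QuotientGroup.preimageMkEquivSubgroupProdSet _ T),
      Nat.card_prod, Nat.card_coe_set_eq]
  rw [index_centralizer_singleton, index_centralizer_singleton, ← hpre]
  exact Set.ncard_le_ncard hsub (Set.toFinite _)

theorem card_centralizer_mk_center_le (x : G) :
    Nat.card (centralizer {(x : G ⧸ center G)}) ≤ Nat.card (centralizer {x}) := by
  have hpos : 0 < Nat.card (center G) * (centralizer {(x : G ⧸ center G)}).index :=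
    Nat.mul_pos Nat.card_pos (Nat.pos_of_ne_zero index_ne_zero_of_finite)
  refine Nat.le_of_mul_le_mul_right ?_ hpos
  calc Nat.card (centralizer {(x : G ⧸ center G)}) *
        (Nat.card (center G) * (centralizer {(x : G ⧸ center G)}).index)
      = Nat.card (centralizer {x}) * (centralizer {x}).index := by
        rw [card_mul_index, card_eq_card_quotient_mul_card_subgroup (center G),
          ← card_mul_index (centralizer {(x : G ⧸ center G)})]
        ring
    _ ≤ _ := Nat.mul_le_mul_left _ (index_centralizer_le_card_center_mul x)

end Centralizer

section MaximalClass

variable {p n : ℕ} [hp : Fact p.Prime] {G : Type*} [Group G] [Finite G]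

theorem card_center_eq_of_card_centralizer_le (hG : Nat.card G = p ^ n) (hn : 2 < n) (x : G)
    (hx : Nat.card (centralizer {x}) ≤ p ^ 2) : Nat.card (center G) = p := by
  have hxZ : x ∉ center G := fun h => by
    rw [centralizer_eq_top_iff_subset.mpr (Set.singleton_subset_iff.mpr h), card_top, hG] at hx
    have := (Nat.pow_le_pow_iff_right hp.out.one_lt).mp hx
    omega
  have hlt : center G < centralizer {x} :=
    lt_of_le_of_ne (center_le_centralizer _)
      fun h => hxZ (h ▸ mem_centralizer_singleton_iff.mpr rfl)
  obtain ⟨k, hk0, hk⟩ := IsPGroup.card_center_eq_prime_pow hG (by omega)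
  have hcard : p ^ k < p ^ 2 :=
    hk ▸ (lt_of_not_ge fun h => hlt.ne (eq_of_le_of_card_ge hlt.le h)).trans_le hx
  have hk2 := (Nat.pow_lt_pow_iff_right hp.out.one_lt).mp hcard
  rw [hk, show k = 1 by omega, pow_one]

theorem nilpotencyClass_eq_of_card_centralizer_le (hn : 2 ≤ n) (hG : Nat.card G = p ^ n)
    (x : G) (hx : Nat.card (centralizer {x}) ≤ p ^ 2) :
    Group.nilpotencyClass G = n - 1 := by
  induction n, hn using Nat.le_induction generalizing G with
  | base =>
    have := (IsPGroup.of_card hG).isNilpotent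
    have hle : Group.nilpotencyClass G ≤ 1 := Group.IsNilpotent.nilpotencyClass_le_one_iff.mpr
      (IsPGroup.isMulCommutative_of_card_eq_prime_sq hG)
    have hne : Group.nilpotencyClass G ≠ 0 := by
      rw [ne_eq, Group.nilpotencyClass_zero_iff_subsingleton, not_subsingleton_iff_nontrivial,
        ← Finite.one_lt_card_iff_nontrivial, hG]
      exact Nat.one_lt_pow two_ne_zero hp.out.one_lt
    omega
  | succ n hn ih =>
    have hZ := card_center_eq_of_card_centralizer_le hG (by omega) x hx
    have hQ : Nat.card (G ⧸ center G) = p ^ n := by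
      apply Nat.eq_of_mul_eq_mul_right hp.out.pos
      rw [← hZ, ← card_eq_card_quotient_mul_card_subgroup, hG, hZ, pow_succ]
    have hclass := ih hQ (x : G ⧸ center G) ((card_centralizer_mk_center_le x).trans hx)
    rw [Group.nilpotencyClass_quotient_center] at hclass
    omega

end MaximalClass

theorem CommGroup.card_le_exponent_pow_rank {A : Type*} [CommGroup A] [Finite A] :
    Nat.card A ≤ Monoid.exponent A ^ Group.rank A := by
  set e := Monoid.exponent A
  have he : 0 < e := Nat.pos_of_ne_zero Monoid.exponent_ne_zero_of_finite
  obtain ⟨S, hS, hclosure⟩ := Group.rank_spec A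
  have hsurj : Function.Surjective fun f : S → Fin e => ∏ a : S, (a : A) ^ (f a : ℕ) := by
    intro z
    have hz : z ∈ Submonoid.closure (S : Set A) := by
      rw [← closure_toSubmonoid_of_finite, hclosure]; trivial
    obtain ⟨f, -, rfl⟩ := Submonoid.mem_closure_finset.mp hz
    refine ⟨fun a => ⟨f a % e, Nat.mod_lt _ he⟩, ?_⟩
    rw [← Finset.prod_coe_sort S]
    exact Finset.prod_congr rfl fun a _ => (pow_eq_pow_mod _ (Monoid.pow_exponent_eq_one _)).symm
  calc Nat.card A ≤ Nat.card (S → Fin e) := Nat.card_le_card_of_surjective _ hsurj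
    _ = e ^ Group.rank A := by simp [Nat.card_fun, hS]

theorem Group.rank_le_one_of_isCyclic {G : Type*} [Group G] [Group.FG G] [IsCyclic G] :
    Group.rank G ≤ 1 := by
  obtain ⟨g, hg⟩ := IsCyclic.exists_generator (α := G)
  have hclosure : closure (({g} : Finset G) : Set G) = ⊤ := by
    rw [Finset.coe_singleton, ← zpowers_eq_closure]
    exact eq_top_iff.mpr fun y _ => hg y
  exact Group.rank_le hclosure

namespace IsPGroup

variable {p : ℕ} [hp : Fact p.Prime] {G : Type*} [Group G] [Finite G] (hG : IsPGroup p G)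
include hG

/-- `M` lies in a subgroup of order `|G| / p`, which cannot be `⊤`, so it is `M`. -/
theorem index_eq_of_isCoatom {M : Subgroup G} (hM : IsCoatom M) : M.index = p := by
  have hinj := Nat.pow_right_injective hp.out.two_le
  obtain ⟨n, hn⟩ := hG.exists_card_eq
  obtain ⟨k, hk⟩ := (hG.to_subgroup M).exists_card_eq
  obtain ⟨m, hm⟩ := hG.index M
  have hkmn : k + m = n := hinj <| by simp only [pow_add, ← hk, ← hm, card_mul_index, hn]
  have hm0 : m ≠ 0 := by
    rintro rfl
    exact hM.1 (index_eq_one.mp (by simpa using hm))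
  obtain ⟨K, hK, hMK⟩ := Sylow.exists_subgroup_card_pow_prime_le p (m := n - 1)
    (hn ▸ pow_dvd_pow p (n.sub_le 1)) M hk (by omega)
  have hKM : K = M := by
    by_contra hne
    rw [hM.2 K (lt_of_le_of_ne hMK (Ne.symm hne)), card_top, hn] at hK
    have := hinj hK
    omega
  rw [hKM, hk] at hK
  have := hinj hK
  rw [hm, show m = 1 by omega, pow_one]

theorem commutator_le_of_isCoatom {M : Subgroup G} (hM : IsCoatom M) : commutator G ≤ M := by
  have := hG.isNilpotent
  have := Group.normalizerCondition_of_isNilpotent.normal_of_coatom M hM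
  have := isCyclic_of_prime_card (α := G ⧸ M) (hG.index_eq_of_isCoatom hM)
  exact Normal.quotient_commutative_iff_commutator_le.mp inferInstance

theorem pow_mem_of_isCoatom {M : Subgroup G} (hM : IsCoatom M) (g : G) : g ^ p ∈ M := by
  have := hG.isNilpotent
  have := Group.normalizerCondition_of_isNilpotent.normal_of_coatom M hM
  simpa [hG.index_eq_of_isCoatom hM] using M.pow_index_mem g

theorem card_quotient_frattini_le_pow_rank :
    Nat.card (G ⧸ frattini G) ≤ p ^ Group.rank G := by
  have hcomm : commutator G ≤ frattini G := le_iInf₂ fun M hM => hG.commutator_le_of_isCoatom hM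
  have hpow (g : G) : g ^ p ∈ frattini G :=
    mem_iInf.mpr fun M => mem_iInf.mpr fun hM => hG.pow_mem_of_isCoatom hM g
  let _ : CommGroup (G ⧸ frattini G) :=
    { mul_comm := (Normal.quotient_commutative_iff_commutator_le.mpr hcomm).is_comm.comm }
  have hexp : Monoid.exponent (G ⧸ frattini G) ≤ p := by
    refine Nat.le_of_dvd hp.out.pos (Monoid.exponent_dvd_of_forall_pow_eq_one ?_)
    rintro ⟨g⟩
    exact (QuotientGroup.eq_one_iff _).mpr (hpow g)
  calc Nat.card (G ⧸ frattini G)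
      ≤ Monoid.exponent (G ⧸ frattini G) ^ Group.rank (G ⧸ frattini G) :=
        CommGroup.card_le_exponent_pow_rank
    _ ≤ p ^ Group.rank (G ⧸ frattini G) := Nat.pow_le_pow_left hexp _
    _ ≤ p ^ Group.rank G := Nat.pow_le_pow_right hp.out.pos
        (Group.rank_le_of_surjective _ (QuotientGroup.mk'_surjective _))

end IsPGroup

theorem statement_11_general (p n : ℕ) (hp : p.Prime) {G : Type*} [Group G] [Finite G]
    (hcard : Nat.card G = p ^ n)
    (hrank : Group.rank G = 2) (hnotmax : Group.nilpotencyClass G ≠ n - 1) :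
    ∀ x : G, ∃ t ∈ frattini G, ∀ g : G, t ≠ x⁻¹ * g⁻¹ * x * g := by
  have := Fact.mk hp
  have hn : 2 ≤ n := by
    by_contra! hn
    have := isCyclic_of_card_dvd_prime (α := G) (p := p)
      (hcard ▸ (pow_dvd_pow p (by omega : n ≤ 1)).trans (pow_one p).dvd)
    have := Group.rank_le_one_of_isCyclic (G := G)
    omega
  intro x
  by_contra! hcomm
  have hindex : (frattini G).index ≤ p ^ 2 :=
    hrank ▸ (IsPGroup.of_card hcard).card_quotient_frattini_le_pow_rank
  have hC : Nat.card (centralizer {x}) ≤ p ^ 2 :=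
    (card_centralizer_le_index fun t ht => (hcomm t ht).imp fun _ => Eq.symm).trans hindex
  exact hnotmax (nilpotencyClass_eq_of_card_centralizer_le hn hcard x hC)

/-- If `G` is a finite `p`-group of order `p^n` with `d(G) = 2` which is not of maximal
class, then for every `x ∈ G` there is `t ∈ Φ(G)` which is not of the form `[x, g]`. -/
theorem statement_11 (p n : ℕ) (hp : p.Prime) {G : Type*} [Group G] [Finite G]
    [Group.IsNilpotent G] (hcard : Nat.card G = p ^ n)
    (hrank : Group.rank G = 2) (hnotmax : Group.nilpotencyClass G ≠ n - 1) :
    ∀ x : G, ∃ t ∈ frattini G, ∀ g : G, t ≠ x⁻¹ * g⁻¹ * x * g :=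
  statement_11_general p n hp hcard hrank hnotmax
end

section
/- Let G be a finite p-group, x ∈ G ∖ Φ(G) an element of order p, and t ∈ Φ(G) with t ∉ {[x,g] : g ∈ G}. Then the union of all conjugates of ⟨x⟩ intersects the union of all conjugates of ⟨xt⟩ trivially: (⋃_{g∈G} ⟨x⟩^g) ∩ (⋃_{g∈G} ⟨xt⟩^g) = 1. -/
lemma my_mem_frattini_iff {G : Type*} [Group G] {x : G} :
    x ∈ frattini G ↔ ∀ M : Subgroup G, IsCoatom M → x ∈ M := by
  simp only [frattini, Order.radical, Subgroup.mem_iInf, Set.mem_setOf_eq]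

/-- Commutators lie in the Frattini subgroup of a finite `p`-group. -/
lemma my_commutator_mem_frattini {p : ℕ} (hp : p.Prime) {G : Type*} [Group G] [Finite G]
    (hG : IsPGroup p G) (a b : G) : a⁻¹ * b⁻¹ * a * b ∈ frattini G := by
  haveI : Fact p.Prime := ⟨hp⟩
  rw [my_mem_frattini_iff]
  intro M hM
  have hnorm : ∀ H : Subgroup G, IsCoatom H → H.Normal :=
    ((isNilpotent_of_finite_tfae (G := G)).out 0 2).mp hG.isNilpotent
  haveI hMn : M.Normal := hnorm M hM
  -- every nontrivial element of `G ⧸ M` generates it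
  have hgen : ∀ q : G ⧸ M, q ≠ 1 → Subgroup.zpowers q = ⊤ := by
    intro q hq
    obtain ⟨g, rfl⟩ := QuotientGroup.mk_surjective q
    have hle : M ≤ (Subgroup.zpowers ((g : G ⧸ M))).comap (QuotientGroup.mk' M) := by
      intro m hm
      have : (QuotientGroup.mk' M) m = 1 := (QuotientGroup.eq_one_iff m).mpr hm
      simp only [Subgroup.mem_comap, this]
      exact Subgroup.one_mem _
    have hgM : g ∉ M := by
      intro hgM
      exact hq ((QuotientGroup.eq_one_iff g).mpr hgM)
    have hlt : M < (Subgroup.zpowers ((g : G ⧸ M))).comap (QuotientGroup.mk' M) := by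
      refine lt_of_le_of_ne hle ?_
      intro hEq
      apply hgM
      rw [hEq]
      exact Subgroup.mem_zpowers _
    have htop := hM.2 _ hlt
    have := congrArg (Subgroup.map (QuotientGroup.mk' M)) htop
    rwa [Subgroup.map_comap_eq_self_of_surjective (QuotientGroup.mk'_surjective M),
      Subgroup.map_top_of_surjective _ (QuotientGroup.mk'_surjective M)] at this
  -- hence `G ⧸ M` is abelian
  have hcomm : ∀ u v : G ⧸ M, u * v = v * u := by
    intro u v
    by_cases hu : u = 1
    · simp [hu]
    · have : v ∈ Subgroup.zpowers u := by rw [hgen u hu]; exact Subgroup.mem_top v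
      obtain ⟨k, rfl⟩ := this
      show u * u ^ k = u ^ k * u
      exact ((Commute.refl u).zpow_right k)
  -- so the commutator is trivial in the quotient
  rw [← QuotientGroup.eq_one_iff (N := M)]
  have : ((a⁻¹ * b⁻¹ * a * b : G) : G ⧸ M)
      = (a : G ⧸ M)⁻¹ * (b : G ⧸ M)⁻¹ * (a : G ⧸ M) * (b : G ⧸ M) := by
    push_cast; rfl
  rw [this]
  have h1 := hcomm (a : G ⧸ M) (b : G ⧸ M)
  have : (a : G ⧸ M)⁻¹ * (b : G ⧸ M)⁻¹ * (a : G ⧸ M) * (b : G ⧸ M)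
      = ((b : G ⧸ M) * (a : G ⧸ M))⁻¹ * ((a : G ⧸ M) * (b : G ⧸ M)) := by group
  rw [this, h1, inv_mul_cancel]

lemma my_one_mem_conjClosure {G : Type*} [Group G] (w : G) : (1 : G) ∈ conjClosure w := by
  refine Set.mem_iUnion.mpr ⟨1, ?_⟩
  exact ⟨1, Subgroup.one_mem _, by simp⟩

lemma my_key_pow {G : Type*} [Group G] {p : ℕ} (w : G) (hw : w ^ p = 1) (k : ℤ)
    (hk : (p : ℤ) ∣ k - 1) : w ^ k = w := by
  obtain ⟨c, hc⟩ := hk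
  have hk' : k = (p : ℤ) * c + 1 := by linarith
  rw [hk', zpow_add, zpow_one, zpow_mul, zpow_natCast, hw, one_zpow, one_mul]

lemma my_exists_inv {p : ℕ} (hp : p.Prime) {n : ℤ} (hn : ¬ (p : ℤ) ∣ n) :
    ∃ c : ℤ, (p : ℤ) ∣ n * c - 1 := by
  haveI : Fact p.Prime := ⟨hp⟩
  have h0 : (n : ZMod p) ≠ 0 := fun h => hn ((ZMod.intCast_zmod_eq_zero_iff_dvd n p).mp h)
  refine ⟨(((n : ZMod p)⁻¹).val : ℤ), ?_⟩
  rw [← ZMod.intCast_zmod_eq_zero_iff_dvd]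
  push_cast
  rw [ZMod.natCast_val, ZMod.cast_id, mul_inv_cancel₀ h0, sub_self]

/-- Let `G` be a finite `p`-group, `x ∈ G ∖ Φ(G)` of order `p`, and `t ∈ Φ(G)` not of the
form `[x,g]`.  Then the union of all conjugates of `⟨x⟩` meets the union of all conjugates
of `⟨xt⟩` trivially. -/
theorem statement_12 (p : ℕ) (hp : p.Prime) {G : Type*} [Group G] [Finite G]
    (hG : IsPGroup p G) (x t : G)
    (hx : x ∉ frattini G) (hxord : orderOf x = p)
    (ht : t ∈ frattini G) (ht' : ∀ g : G, t ≠ x⁻¹ * g⁻¹ * x * g) :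
    conjClosure x ∩ conjClosure (x * t) = {1} := by
  haveI : Fact p.Prime := ⟨hp⟩
  haveI hΦn : (frattini G).Normal := Subgroup.normal_of_characteristic _
  have hxp : x ^ p = 1 := by rw [← hxord, pow_orderOf_eq_one]
  ext z
  simp only [Set.mem_inter_iff, Set.mem_singleton_iff]
  constructor
  · rintro ⟨hz1, hz2⟩
    obtain ⟨g, w1, hw1, hze1⟩ := Set.mem_iUnion.mp hz1
    obtain ⟨h, w2, hw2, hze2⟩ := Set.mem_iUnion.mp hz2
    obtain ⟨n, rfl⟩ := Subgroup.mem_zpowers_iff.mp hw1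
    obtain ⟨m, rfl⟩ := Subgroup.mem_zpowers_iff.mp hw2
    simp only at hze1 hze2
    replace hze1 : z = g⁻¹ * x ^ n * g := hze1.symm
    replace hze2 : z = h⁻¹ * (x * t) ^ m * h := hze2.symm
    by_contra hz
    -- p does not divide n
    have hn : ¬ ((p : ℤ) ∣ n) := by
      intro hd
      rw [← hxord, orderOf_dvd_iff_zpow_eq_one] at hd
      apply hz
      rw [hze1, hd, mul_one, inv_mul_cancel]
    have htq : ((t : G) : G ⧸ frattini G) = 1 := (QuotientGroup.eq_one_iff t).mpr ht
    -- (x*t)^p ∈ frattini G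
    have hytp : (x * t) ^ p ∈ frattini G := by
      rw [← QuotientGroup.eq_one_iff (N := frattini G)]
      have e : (((x * t) ^ p : G) : G ⧸ frattini G)
          = ((x : G ⧸ frattini G) * ((t : G) : G ⧸ frattini G)) ^ p := by push_cast; rfl
      rw [e, htq, mul_one]
      have e2 : ((x : G) : G ⧸ frattini G) ^ p = ((x ^ p : G) : G ⧸ frattini G) := by
        push_cast; rfl
      rw [e2, hxp]; rfl
    -- z ^ p = 1
    have hxnp : (x ^ n) ^ p = 1 := by
      rw [← zpow_natCast (x ^ n) p, ← zpow_mul, mul_comm n (p : ℤ), zpow_mul, zpow_natCast,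
        hxp, one_zpow]
    have hzp : z ^ p = 1 := by
      rw [hze1, show g⁻¹ * x ^ n * g = g⁻¹ * x ^ n * g⁻¹⁻¹ by rw [inv_inv], conj_pow, hxnp,
        mul_one, mul_inv_cancel]
    -- orderOf (x*t) = p
    have hxt1 : x * t ≠ 1 := by
      intro hxt
      apply hz
      rw [hze2, hxt, one_zpow, mul_one, inv_mul_cancel]
    have hordxt : orderOf (x * t) = p := by
      obtain ⟨k, hk⟩ := hG (x * t)
      obtain ⟨j, hjk, hj⟩ := (Nat.dvd_prime_pow hp).mp (orderOf_dvd_of_pow_eq_one hk)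
      have hj0 : j ≠ 0 := by
        intro h0
        rw [h0, pow_zero] at hj
        exact hxt1 (orderOf_eq_one_iff.mp hj)
      have hj1 : j = 1 := by
        by_contra hj1
        have hj2 : 2 ≤ j := by omega
        have hmp1 : ((x * t) ^ m) ^ p = 1 := by
          have hxtm : (x * t) ^ m = h * z * h⁻¹ := by rw [hze2]; group
          rw [hxtm, conj_pow, hzp, mul_one, mul_inv_cancel]
        have hdd : ((p : ℤ) ^ j) ∣ m * p := by
          have := orderOf_dvd_iff_zpow_eq_one.mpr
            (show (x * t) ^ (m * (p : ℤ)) = 1 by rw [zpow_mul, zpow_natCast]; exact hmp1)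
          rw [hj] at this
          exact_mod_cast this
        have hp0 : (p : ℤ) ≠ 0 := by exact_mod_cast hp.ne_zero
        have hpm : (p : ℤ) ∣ m := by
          have h2 : (p : ℤ) * (p : ℤ) ∣ m * (p : ℤ) := by
            rw [← pow_two]
            exact dvd_trans (pow_dvd_pow _ hj2) hdd
          exact (mul_dvd_mul_iff_right hp0).mp h2
        obtain ⟨c, rfl⟩ := hpm
        have hmem : (x * t) ^ ((p : ℤ) * c) ∈ frattini G := by
          rw [zpow_mul, zpow_natCast]
          exact Subgroup.zpow_mem _ hytp c
        have hzmem : z ∈ frattini G := by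
          rw [hze2]
          have := hΦn.conj_mem _ hmem h⁻¹
          rwa [inv_inv] at this
        have hxnmem : x ^ n ∈ frattini G := by
          have hxn : x ^ n = g * z * g⁻¹ := by rw [hze1]; group
          rw [hxn]
          exact hΦn.conj_mem _ hzmem g
        apply hx
        obtain ⟨c', hc'⟩ := my_exists_inv hp hn
        rw [← my_key_pow x hxp (n * c') hc', zpow_mul]
        exact Subgroup.zpow_mem _ hxnmem c'
      rw [hj1, pow_one] at hj
      exact hj
    have hxtp : (x * t) ^ p = 1 := by rw [← hordxt]; exact pow_orderOf_eq_one _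
    -- p does not divide m
    have hm : ¬ ((p : ℤ) ∣ m) := by
      intro hd
      rw [← hordxt, orderOf_dvd_iff_zpow_eq_one] at hd
      apply hz
      rw [hze2, hd, mul_one, inv_mul_cancel]
    -- the quotient G ⧸ frattini G is abelian
    have hcomm : ∀ u v : G ⧸ frattini G, u * v = v * u := by
      intro u v
      obtain ⟨a, rfl⟩ := QuotientGroup.mk_surjective u
      obtain ⟨b, rfl⟩ := QuotientGroup.mk_surjective v
      rw [← QuotientGroup.mk_mul, ← QuotientGroup.mk_mul, QuotientGroup.eq]
      have heq : (a * b)⁻¹ * (b * a) = b⁻¹ * a⁻¹ * b * a := by group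
      rw [heq]
      exact my_commutator_mem_frattini hp hG b a
    have hconj : ∀ (u : G) (q : G ⧸ frattini G),
        ((u : G) : G ⧸ frattini G)⁻¹ * q * ((u : G) : G ⧸ frattini G) = q := by
      intro u q
      rw [hcomm (((u : G) : G ⧸ frattini G))⁻¹ q, mul_assoc, inv_mul_cancel, mul_one]
    -- n ≡ m mod p
    have hπ : ((x : G) : G ⧸ frattini G) ^ n = ((x : G) : G ⧸ frattini G) ^ m := by
      have e1 : ((z : G) : G ⧸ frattini G) = ((x : G) : G ⧸ frattini G) ^ n := by
        rw [hze1]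
        have e : (((g⁻¹ * x ^ n * g : G)) : G ⧸ frattini G)
            = ((g : G) : G ⧸ frattini G)⁻¹ * ((x : G) : G ⧸ frattini G) ^ n
              * ((g : G) : G ⧸ frattini G) := by push_cast; rfl
        rw [e, hconj]
      have e2 : ((z : G) : G ⧸ frattini G) = ((x : G) : G ⧸ frattini G) ^ m := by
        rw [hze2]
        have e : (((h⁻¹ * (x * t) ^ m * h : G)) : G ⧸ frattini G)
            = ((h : G) : G ⧸ frattini G)⁻¹
              * (((x : G) : G ⧸ frattini G) * ((t : G) : G ⧸ frattini G)) ^ m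
              * ((h : G) : G ⧸ frattini G) := by push_cast; rfl
        rw [e, htq, mul_one, hconj]
      rw [← e1, e2]
    have hordx : orderOf ((x : G) : G ⧸ frattini G) = p := by
      have hdvd : orderOf ((x : G) : G ⧸ frattini G) ∣ p := by
        apply orderOf_dvd_of_pow_eq_one
        have e : ((x : G) : G ⧸ frattini G) ^ p = ((x ^ p : G) : G ⧸ frattini G) := by
          push_cast; rfl
        rw [e, hxp]; rfl
      have hne : ((x : G) : G ⧸ frattini G) ≠ 1 :=
        fun hh => hx ((QuotientGroup.eq_one_iff x).mp hh)
      rcases (Nat.Prime.eq_one_or_self_of_dvd hp _ hdvd) with h1 | h1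
      · exact absurd (orderOf_eq_one_iff.mp h1) hne
      · exact h1
    have hnm : (p : ℤ) ∣ n - m := by
      rw [← hordx, orderOf_dvd_iff_zpow_eq_one, zpow_sub, hπ, mul_inv_cancel]
    -- invert m mod p and derive the contradiction
    obtain ⟨c, hc⟩ := my_exists_inv hp hm
    have hnc : (p : ℤ) ∣ n * c - 1 := by
      have e : n * c - 1 = (n - m) * c + (m * c - 1) := by ring
      rw [e]
      exact dvd_add (Dvd.dvd.mul_right hnm c) hc
    have e1 : z ^ c = g⁻¹ * x * g := by
      rw [hze1, show g⁻¹ * x ^ n * g = g⁻¹ * x ^ n * g⁻¹⁻¹ by rw [inv_inv], conj_zpow,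
        ← zpow_mul, my_key_pow x hxp (n * c) hnc, inv_inv]
    have e2 : z ^ c = h⁻¹ * (x * t) * h := by
      rw [hze2, show h⁻¹ * (x * t) ^ m * h = h⁻¹ * (x * t) ^ m * h⁻¹⁻¹ by rw [inv_inv],
        conj_zpow, ← zpow_mul, my_key_pow (x * t) hxtp (m * c) hc, inv_inv]
    apply ht' (g * h⁻¹)
    have e3 : x * t = h * (g⁻¹ * x * g) * h⁻¹ := by rw [← e1, e2]; group
    have e4 : x⁻¹ * (g * h⁻¹)⁻¹ * x * (g * h⁻¹) = x⁻¹ * (h * (g⁻¹ * x * g) * h⁻¹) := by group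
    rw [e4, ← e3]
    group
  · rintro rfl
    exact ⟨my_one_mem_conjClosure x, my_one_mem_conjClosure (x * t)⟩
end

section
/- No finite quotient of the infinite dihedral group D_∞ is a Beauville group. In particular, if F is the free product of two cyclic groups of order 2, then F/λ_n(F) is not a Beauville group for any n. -/
/-- Relators `x^p, y^p` for the free product `C_p * C_p` of two cyclic groups of order `p`. -/
def freeProdRels (p : ℕ) : Set (FreeGroup (Fin 2)) :=
  {FreeGroup.of 0 ^ p, FreeGroup.of 1 ^ p}

/-!
`D∞` and `C₂ * C₂` are generated by two involutions `a, b`, and so is each of their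
quotients. With `u = ab`, every element of such a group lies in `⟨u⟩` or is an involution
inverting `u`, so the group is cyclic or dihedral.

A finite cyclic group `⟨g⟩` of order `pm`, `p` prime, is not Beauville: if `g^i, g^j` generate
it then `p` does not divide both `i` and `j`, and `g^m` is a power of whichever of them is prime
to `p`. So `g^m` lies in every `Σ(x, y)`.

Otherwise, for a generating pair `(x, y)` one of `x, y, xy`, say `z`, lies in `⟨u⟩` and another
is a reflection `s` with `⟨s, z⟩ = G`. Every element of `G` is then in `⟨z⟩` or in `s⟨z⟩`, and
the second coset misses `⟨u⟩`; hence `u ∈ ⟨z⟩ ⊆ Σ(x, y)`.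
-/

open Subgroup

section

variable {G : Type*} [Group G]

lemma closure_pair_mul_right (x y : G) : closure {x, x * y} = closure {x, y} := by
  apply le_antisymm <;> refine (closure_le _).mpr (Set.insert_subset_iff.mpr
    ⟨subset_closure (Set.mem_insert _ _), Set.singleton_subset_iff.mpr ?_⟩)
  · exact mul_mem (subset_closure (Set.mem_insert _ _))
      (subset_closure (Set.mem_insert_of_mem _ rfl))
  · have hxy : x * y ∈ closure {x, x * y} := subset_closure (Set.mem_insert_of_mem _ rfl)
    simpa using mul_mem (inv_mem (subset_closure (Set.mem_insert _ _))) hxy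

lemma mem_sigmaSet_of_mem_zpowers {h x y : G}
    (hh : h ∈ zpowers x ∨ h ∈ zpowers y ∨ h ∈ zpowers (x * y)) : h ∈ SigmaSet x y := by
  have subset_conjClosure : ∀ z : G, (zpowers z : Set G) ⊆ conjClosure z :=
    fun z w hw => Set.mem_iUnion.mpr ⟨1, w, hw, by simp⟩
  rcases hh with hx | hy | hxy
  · exact .inl (.inl (subset_conjClosure x hx))
  · exact .inl (.inr (subset_conjClosure y hy))
  · exact .inr (subset_conjClosure (x * y) hxy)

lemma not_isBeauvilleGroup_of_forall_mem_sigmaSet {h : G} (hh : h ≠ 1)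
    (hmem : ∀ x y : G, closure {x, y} = ⊤ → h ∈ SigmaSet x y) : ¬ IsBeauvilleGroup G := by
  rintro ⟨-, -, x₁, y₁, x₂, y₂, h₁, h₂, hinter⟩
  have : h ∈ SigmaSet x₁ y₁ ∩ SigmaSet x₂ y₂ := ⟨hmem x₁ y₁ h₁, hmem x₂ y₂ h₂⟩
  exact hh (by rwa [hinter] at this)

lemma zpow_mem_zpowers_zpow_of_isCoprime {g : G} {p m i : ℤ} (hg : g ^ (p * m) = 1)
    (hpi : IsCoprime p i) : g ^ m ∈ zpowers (g ^ i) := by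
  obtain ⟨a, b, hab⟩ := hpi
  refine mem_zpowers_iff.mpr ⟨b * m, ?_⟩
  calc (g ^ i) ^ (b * m) = (g ^ (p * m)) ^ a * (g ^ i) ^ (b * m) := by rw [hg, one_zpow, one_mul]
    _ = g ^ ((a * p + b * i) * m) := by rw [← zpow_mul, ← zpow_mul, ← zpow_add]; ring_nf
    _ = g ^ m := by rw [hab, one_mul]

theorem IsCyclic.not_isBeauvilleGroup [IsCyclic G] : ¬ IsBeauvilleGroup G := by
  intro hB
  have hfin : Finite G := hB.1
  have hnt : Nontrivial G := hB.2.1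
  obtain ⟨g, hg⟩ := isCyclic_iff_exists_zpowers_eq_top.mp ‹IsCyclic G›
  have hn : 1 < orderOf g := orderOf_eq_card_of_zpowers_eq_top hg ▸ Finite.one_lt_card
  set p := (orderOf g).minFac
  have hp : p.Prime := Nat.minFac_prime hn.ne'
  obtain ⟨m, hm⟩ : p ∣ orderOf g := Nat.minFac_dvd _
  have hm0 : 0 < m := Nat.pos_of_ne_zero (by rintro rfl; omega)
  have hgm : g ^ ((p : ℤ) * m) = 1 := by
    rw [← Nat.cast_mul, ← hm, zpow_natCast, pow_orderOf_eq_one]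
  have hg_notMem : g ∉ zpowers (g ^ p) := by
    rw [mem_zpowers_pow_iff, Nat.gcd_eq_left (Nat.minFac_dvd _)]
    exact hp.one_lt.ne'
  have hpow : ∀ k : ℤ, g ^ (m : ℤ) ∈ zpowers (g ^ k) ∨ g ^ k ∈ zpowers (g ^ p) := fun k => by
    rcases dvd_or_isCoprime _ k (Nat.prime_iff_prime_int.mp hp).irreducible with ⟨l, rfl⟩ | hpk
    · exact .inr ⟨l, by simp only [← zpow_natCast, ← zpow_mul]⟩
    · exact .inl (zpow_mem_zpowers_zpow_of_isCoprime hgm hpk)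
  refine not_isBeauvilleGroup_of_forall_mem_sigmaSet (h := g ^ (m : ℤ)) ?_ (fun x y hxy => ?_) hB
  · rw [zpow_natCast]
    exact pow_ne_one_of_lt_orderOf hm0.ne' (hm ▸ lt_mul_left hm0 hp.one_lt)
  obtain ⟨i, rfl⟩ := mem_zpowers_iff.mp (hg ▸ mem_top x)
  obtain ⟨j, rfl⟩ := mem_zpowers_iff.mp (hg ▸ mem_top y)
  rcases hpow i with hi | hi
  · exact mem_sigmaSet_of_mem_zpowers (.inl hi)
  rcases hpow j with hj | hj
  · exact mem_sigmaSet_of_mem_zpowers (.inr (.inl hj))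
  have hle : closure {g ^ i, g ^ j} ≤ zpowers (g ^ p) :=
    (closure_le _).mpr (Set.insert_subset_iff.mpr ⟨hi, Set.singleton_subset_iff.mpr hj⟩)
  exact absurd (hle (hxy ▸ mem_top g)) hg_notMem

lemma conj_eq_inv_of_mem_zpowers {x y t : G} (hxy : x * y * x⁻¹ = y⁻¹) (ht : t ∈ zpowers y) :
    x * t * x⁻¹ = t⁻¹ := by
  obtain ⟨k, rfl⟩ := mem_zpowers_iff.mp ht
  rw [← conj_zpow, hxy, inv_zpow]

lemma mem_zpowers_or_mul_mem_zpowers {x y g : G} (hx : x ^ 2 = 1) (hxy : x * y * x⁻¹ = y⁻¹)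
    (hg : g ∈ closure {x, y}) : g ∈ zpowers y ∨ x * g ∈ zpowers y := by
  have hxx : x * x = 1 := sq x ▸ hx
  have hx_inv : x⁻¹ = x := (mul_eq_one_iff_eq_inv.mp hxx).symm
  have hxxz (z : G) : x * (x * z) = z := by rw [← mul_assoc, hxx, one_mul]
  have hconj {t : G} (ht : t ∈ zpowers y) : x * t * x⁻¹ ∈ zpowers y :=
    conj_eq_inv_of_mem_zpowers hxy ht ▸ inv_mem ht
  induction hg using closure_induction with
  | mem g hg =>
    rcases hg with rfl | rfl
    · exact .inr (hxx ▸ one_mem _)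
    · exact .inl (mem_zpowers g)
  | one => exact .inl (one_mem _)
  | mul g h _ _ ihg ihh =>
    rcases ihg with hg | hg <;> rcases ihh with hh | hh
    · exact .inl (mul_mem hg hh)
    · exact .inr (by simpa [mul_assoc] using mul_mem (hconj hg) hh)
    · exact .inr (by simpa [mul_assoc] using mul_mem hg hh)
    · refine .inl ?_
      simpa [mul_assoc, hx_inv, hxxz] using mul_mem (hconj hg) hh
  | inv g _ ihg =>
    rcases ihg with hg | hg
    · exact .inl (inv_mem hg)
    · refine .inr ?_
      simpa [mul_assoc, hx_inv, hxx] using hconj (inv_mem hg)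

lemma sq_eq_one_and_conj_eq_inv_of_mul_mem_zpowers {x y g : G} (hx : x ^ 2 = 1)
    (hxy : x * y * x⁻¹ = y⁻¹) (hg : x * g ∈ zpowers y) : g ^ 2 = 1 ∧ g * y * g⁻¹ = y⁻¹ := by
  have hxx : x * x = 1 := sq x ▸ hx
  obtain ⟨k, hk⟩ := mem_zpowers_iff.mp hg
  obtain rfl : g = x * y ^ k := by rw [hk, ← mul_assoc, hxx, one_mul]
  have hconj : x * y ^ k * x⁻¹ = (y ^ k)⁻¹ := conj_eq_inv_of_mem_zpowers hxy (zpow_mem_zpowers y k)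
  constructor
  · calc (x * y ^ k) ^ 2 = (x * y ^ k * x⁻¹) * (x * x) * y ^ k := by rw [sq]; group
      _ = 1 := by rw [hconj, hxx, mul_one, inv_mul_cancel]
  · calc x * y ^ k * y * (x * y ^ k)⁻¹ = x * y * x⁻¹ := by group
      _ = y⁻¹ := hxy

lemma zpowers_le_zpowers_of_closure_pair_eq_top {u g k : G} (hg : g ^ 2 = 1)
    (hgu : g * u * g⁻¹ = u⁻¹) (hgT : g ∉ zpowers u) (hk : k ∈ zpowers u)
    (hgk : closure {g, k} = ⊤) : zpowers u ≤ zpowers k := by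
  intro t ht
  refine (mem_zpowers_or_mul_mem_zpowers hg (conj_eq_inv_of_mem_zpowers hgu hk)
    (hgk ▸ mem_top t)).resolve_right fun hgt => hgT ?_
  simpa using mul_mem (zpowers_le_of_mem hk hgt) (inv_mem ht)

theorem not_isBeauvilleGroup_of_closure_pair_eq_top {a b : G} (ha : a ^ 2 = 1) (hb : b ^ 2 = 1)
    (hab : closure {a, b} = ⊤) : ¬ IsBeauvilleGroup G := by
  by_cases hcyc : IsCyclic G
  · exact IsCyclic.not_isBeauvilleGroup
  set u := a * b
  have hau : a * u * a⁻¹ = u⁻¹ := by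
    rw [mul_inv_rev, inv_eq_of_mul_eq_one_right (sq a ▸ ha), inv_eq_of_mul_eq_one_right (sq b ▸ hb)]
    calc a * (a * b) * a = (a * a) * (b * a) := by group
      _ = b * a := by rw [← sq, ha, one_mul]
  have hgen : closure {a, u} = ⊤ := (closure_pair_mul_right a b).trans hab
  have hT (g : G) : g ∈ zpowers u ∨ a * g ∈ zpowers u :=
    mem_zpowers_or_mul_mem_zpowers ha hau (hgen ▸ mem_top g)
  have hrefl {g : G} (hg : g ∉ zpowers u) : g ^ 2 = 1 ∧ g * u * g⁻¹ = u⁻¹ :=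
    sq_eq_one_and_conj_eq_inv_of_mul_mem_zpowers ha hau ((hT g).resolve_left hg)
  have not_both_mem {x y : G} (hxy : closure {x, y} = ⊤) (hx : x ∈ zpowers u)
      (hy : y ∈ zpowers u) : False :=
    hcyc <| isCyclic_iff_exists_zpowers_eq_top.mpr ⟨u, top_le_iff.mp <| hxy ▸
      (closure_le _).mpr (Set.insert_subset_iff.mpr ⟨hx, Set.singleton_subset_iff.mpr hy⟩)⟩
  have hu : u ≠ 1 := fun hu => hcyc <| isCyclic_iff_exists_zpowers_eq_top.mpr
    ⟨a, by rw [zpowers_eq_closure, ← hgen, hu, Set.pair_comm, closure_insert_one]⟩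
  refine not_isBeauvilleGroup_of_forall_mem_sigmaSet hu fun x y hxy => ?_
  by_cases hx : x ∈ zpowers u <;> by_cases hy : y ∈ zpowers u
  · exact (not_both_mem hxy hx hy).elim
  · have hyx : closure {y, x} = ⊤ := by rwa [Set.pair_comm]
    exact mem_sigmaSet_of_mem_zpowers <| .inl <|
      zpowers_le_zpowers_of_closure_pair_eq_top (hrefl hy).1 (hrefl hy).2 hy hx hyx (mem_zpowers u)
  · exact mem_sigmaSet_of_mem_zpowers <| .inr <| .inl <|
      zpowers_le_zpowers_of_closure_pair_eq_top (hrefl hx).1 (hrefl hx).2 hx hy hxy (mem_zpowers u)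
  · have hxy_mem : x * y ∈ zpowers u := (hT (x * y)).resolve_right fun h => hy <| by
      simpa [mul_assoc] using mul_mem (inv_mem ((hT x).resolve_left hx)) h
    exact mem_sigmaSet_of_mem_zpowers <| .inr <| .inr <|
      zpowers_le_zpowers_of_closure_pair_eq_top (hrefl hx).1 (hrefl hx).2 hx hxy_mem
        ((closure_pair_mul_right x y).trans hxy) (mem_zpowers u)

theorem not_isBeauvilleGroup_of_surjective {H : Type*} [Group H] {f : G →* H}
    (hf : Function.Surjective f) {a b : G} (ha : a ^ 2 = 1) (hb : b ^ 2 = 1)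
    (hab : closure {a, b} = ⊤) : ¬ IsBeauvilleGroup H := by
  refine not_isBeauvilleGroup_of_closure_pair_eq_top (a := f a) (b := f b)
    (by rw [← map_pow, ha, map_one]) (by rw [← map_pow, hb, map_one]) ?_
  rw [← Set.image_pair, ← MonoidHom.map_closure, hab, map_top_of_surjective f hf]

end

lemma DihedralGroup.closure_sr_zero_sr_one (n : ℕ) :
    closure {sr 0, sr 1} = (⊤ : Subgroup (DihedralGroup n)) := by
  have hsr0 : sr 0 ∈ closure {sr 0, (sr 1 : DihedralGroup n)} := subset_closure (Set.mem_insert _ _)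
  have hr (i : ZMod n) : r i ∈ closure {sr 0, (sr 1 : DihedralGroup n)} := by
    have hr1 : r 1 ∈ closure {sr 0, (sr 1 : DihedralGroup n)} := by
      simpa [sr_mul_sr] using mul_mem hsr0 (subset_closure (Set.mem_insert_of_mem _ rfl))
    simpa [r_one_zpow, ZMod.intCast_zmod_cast] using zpow_mem hr1 (i.cast : ℤ)
  refine eq_top_iff.mpr fun g _ => ?_
  rcases g with i | i
  · exact hr i
  · simpa [sr_mul_r] using mul_mem hsr0 (hr i)

lemma PresentedGroup.closure_of_zero_of_one (rels : Set (FreeGroup (Fin 2))) :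
    closure {of 0, of 1} = (⊤ : Subgroup (PresentedGroup rels)) := by
  rw [← closure_range_of rels]
  congr
  ext g
  simp [Fin.exists_fin_two, eq_comm]

/-- No finite quotient of the infinite dihedral group is a Beauville group; in particular,
for `F = C₂ * C₂`, no quotient `F/λ_n(F)` is a Beauville group. -/
theorem statement_15 :
    (∀ (N : Subgroup (DihedralGroup 0)) (_ : N.Normal),
        ¬ IsBeauvilleGroup (DihedralGroup 0 ⧸ N)) ∧
    (∀ n : ℕ, ¬ IsBeauvilleGroup (PresentedGroup (freeProdRels 2) ⧸ lam 2 n)) := by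
  refine ⟨fun N _ => ?_, fun n => ?_⟩
  · exact not_isBeauvilleGroup_of_surjective (QuotientGroup.mk'_surjective N)
      (by rw [sq, DihedralGroup.sr_mul_self]) (by rw [sq, DihedralGroup.sr_mul_self])
      (DihedralGroup.closure_sr_zero_sr_one 0)
  · have hrel (i : Fin 2) (hi : FreeGroup.of i ^ 2 ∈ freeProdRels 2) :
        (PresentedGroup.of i : PresentedGroup (freeProdRels 2)) ^ 2 = 1 :=
      (map_pow _ _ _).symm.trans (PresentedGroup.one_of_mem hi)
    exact not_isBeauvilleGroup_of_surjective (QuotientGroup.mk'_surjective (lam 2 n))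
      (hrel 0 (.inl rfl)) (hrel 1 (.inr rfl)) (PresentedGroup.closure_of_zero_of_one _)
end
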